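/- Transformation theorem for Segal polynomials: for every multi-index α ∈ ℕ^m with |α| < N and every x ∈ ℝ^n, p_α^{μ_T}(Tx) = Σ_{β ∈ ℕ^n, |β| = |α|} A_{α,β} p_β^μ(x), where A_{α,β} = Σ_Γ (α!/Γ!) T^Γ, the sum running over all m×n matrices Γ with nonnegative integer entries whose row sums equal α (Γ·1_n = α) and column sums equal β (Γᵗ·1_m = β). -/

import Mathlib

open MeasureTheory MvPolynomial

noncomputable section

def mdeg {ι : Type*} [Fintype ι] (β : ι →₀ ℕ) : ℕ := ∑ i, β i

def IsSegalFamily {ι : Type*} [Fintype ι] [DecidableEq ι]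
    (μ : Measure (ι → ℝ)) (N : ℕ∞)
    (p : (ι →₀ ℕ) → MvPolynomial ι ℝ) : Prop :=
  p 0 = 1 ∧
  (∀ β : ι →₀ ℕ, (mdeg β : ℕ∞) < N → ∀ j : ι,
      pderiv j (p β) = (β j : ℝ) • p (β - Finsupp.single j 1)) ∧
  (∀ β : ι →₀ ℕ, 0 < mdeg β → (mdeg β : ℕ∞) < N → ∫ x, eval x (p β) ∂μ = 0)

def HasMoments {ι : Type*} [Fintype ι] (μ : Measure (ι → ℝ)) (N : ℕ∞) : Prop :=
  ∀ k : ℕ, (k : ℕ∞) < N → Integrable (fun x : ι → ℝ => (∑ i, |x i|) ^ k) μ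

open scoped Classical in
def transCoeff {m n : ℕ} (T : Matrix (Fin m) (Fin n) ℝ)
    (α : Fin m → ℕ) (β : Fin n → ℕ) : ℝ :=
  ∑ᶠ Γ : Matrix (Fin m) (Fin n) ℕ,
    if (∀ i, ∑ j, Γ i j = α i) ∧ (∀ j, ∑ i, Γ i j = β j) then
      ((∏ i, Nat.factorial (α i) : ℕ) : ℝ) / ((∏ i, ∏ j, Nat.factorial (Γ i j) : ℕ) : ℝ) * ∏ i, ∏ j, T i j ^ Γ i j
    else 0

/-!
Let `linSubst T` be the substitution `f ↦ f ∘ T` on polynomials and `segalMap p` the linear map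
sending `X^β` to `p β`. The claim is `linSubst T (pT α) = segalMap p (linSubst T X^α)`, read
coefficientwise: by the multinomial theorem, the coefficients of
`linSubst T X^α = ∏ i, (∑ j, T i j • X j) ^ α i` are the `transCoeff T α β`, and they vanish unless
`|β| = |α|`. Both sides have the same partial derivatives: by the chain rule, the Appell property
`∂ⱼ ∘ segalMap p = segalMap p ∘ ∂ⱼ` and induction on `|α|`. So they differ by a constant, and that
constant is zero because both sides integrate to zero against `μ`, the left one after the change
of variables `y = T x`.
-/

section Mdeg

variable {ι : Type*} [Fintype ι]

theorem mdeg_eq_degree (β : ι →₀ ℕ) : mdeg β = β.degree :=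
  (Finsupp.degree_eq_sum β).symm

theorem mdeg_sub_single_add_one {β : ι →₀ ℕ} {j : ι} (h : β j ≠ 0) :
    mdeg (β - Finsupp.single j 1) + 1 = mdeg β := by
  conv_rhs =>
    rw [← tsub_add_cancel_of_le (Finsupp.single_le_iff.mpr (Nat.one_le_iff_ne_zero.mpr h))]
  rw [mdeg_eq_degree, mdeg_eq_degree, map_add, Finsupp.degree_single]

end Mdeg

namespace MvPolynomial

variable {R σ τ : Type*}

theorem eq_C_constantCoeff_of_pderiv_eq_zero [CommRing R] [IsAddTorsionFree R]
    {f : MvPolynomial σ R} (h : ∀ i, pderiv i f = 0) : f = C (constantCoeff f) := by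
  apply coe_injective σ R
  refine MvPowerSeries.pderiv.ext (fun i => ?_) ?_
  · simp [MvPowerSeries.pderiv_coe, h]
  · simp only [← MvPowerSeries.coeff_zero_eq_constantCoeff_apply, coeff_coe, coeff_zero_C,
      constantCoeff_eq]

theorem totalDegree_le_add_one_of_pderiv [CommSemiring R] [IsAddTorsionFree R]
    {f : MvPolynomial σ R} {d : ℕ} (h : ∀ i, (pderiv i f).totalDegree ≤ d) :
    f.totalDegree ≤ d + 1 := by
  refine Finset.sup_le fun γ hγ => ?_
  obtain rfl | ⟨i, hi⟩ := (eq_or_ne γ 0).imp id Finsupp.ne_iff.mp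
  · simp
  have hγ' : γ - Finsupp.single i 1 + Finsupp.single i 1 = γ :=
    tsub_add_cancel_of_le (Finsupp.single_le_iff.mpr (Nat.one_le_iff_ne_zero.mpr hi))
  have hmem : γ - Finsupp.single i 1 ∈ (pderiv i f).support := by
    rw [mem_support_iff, coeff_pderiv, hγ', ← Nat.cast_succ, mul_comm, ← nsmul_eq_mul]
    exact smul_ne_zero (Nat.succ_ne_zero _) (mem_support_iff.mp hγ)
  have := (le_totalDegree hmem).trans (h i)
  change γ.degree ≤ d + 1
  change (γ - Finsupp.single i 1).degree ≤ d at this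
  rw [← hγ', map_add, Finsupp.degree_single]
  omega

theorem pderiv_aeval [CommSemiring R] [Fintype τ] (g : τ → MvPolynomial σ R)
    (f : MvPolynomial τ R) (j : σ) :
    pderiv j (aeval g f) = ∑ i, pderiv j (g i) * aeval g (pderiv i f) := by
  classical
  induction f using MvPolynomial.induction_on with
  | C a => simp
  | add f₁ f₂ h₁ h₂ => simp only [map_add, h₁, h₂, mul_add, Finset.sum_add_distrib]
  | mul_X f i ih =>
    simp only [map_mul, aeval_X, Derivation.leibniz, ih, pderiv_X, smul_eq_mul, map_add,
      mul_add, Finset.sum_add_distrib, Finset.mul_sum]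
    simp [Pi.single_apply, mul_comm, mul_left_comm]

variable {ι : Type*} {μ : Measure (ι → ℝ)}

theorem eq_of_pderiv_eq_of_integral_eq [IsProbabilityMeasure μ] {f g : MvPolynomial ι ℝ}
    (hD : ∀ i, pderiv i f = pderiv i g) (hg : Integrable (fun x => eval x g) μ)
    (h : ∫ x, eval x f ∂μ = ∫ x, eval x g ∂μ) : f = g := by
  set c := constantCoeff (f - g)
  have hfg : f = g + C c := by
    rw [← eq_C_constantCoeff_of_pderiv_eq_zero (f := f - g) (by simp [hD])]
    ring
  have hc : c = 0 := by
    rw [hfg] at h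
    simpa [integral_add hg (integrable_const c)] using h
  rw [hfg, hc, map_zero, add_zero]

variable [Fintype ι] {N : ℕ∞}

theorem integrable_prod_pow (hmom : HasMoments μ N) {γ : ι →₀ ℕ}
    (hγ : (mdeg γ : ℕ∞) < N) : Integrable (fun x => ∏ i, x i ^ γ i) μ := by
  refine (hmom _ hγ).mono'
    (continuous_finsetProd _ fun i _ => (continuous_apply i).pow _).aestronglyMeasurable
    (Filter.Eventually.of_forall fun x => ?_)
  rw [Real.norm_eq_abs, Finset.abs_prod, mdeg, ← Finset.prod_pow_eq_pow_sum]
  gcongr with i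
  rw [abs_pow]
  gcongr
  exact Finset.single_le_sum (fun l _ => abs_nonneg (x l)) (Finset.mem_univ i)

theorem integrable_eval (hmom : HasMoments μ N) {f : MvPolynomial ι ℝ}
    (hf : (f.totalDegree : ℕ∞) < N) : Integrable (fun x => eval x f) μ := by
  simp_rw [eval_eq']
  refine integrable_finsetSum _ fun γ hγ => (integrable_prod_pow hmom ?_).const_mul _
  rw [mdeg_eq_degree]
  exact lt_of_le_of_lt (by exact_mod_cast le_totalDegree hγ) hf

end MvPolynomial

section LinSubst

variable {R ι κ : Type*} [CommSemiring R] [Fintype ι]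

def linSubst (T : Matrix κ ι R) : MvPolynomial κ R →ₐ[R] MvPolynomial ι R :=
  aeval fun i => ∑ j, C (T i j) * X j

theorem eval_linSubst (T : Matrix κ ι R) (f : MvPolynomial κ R) (x : ι → R) :
    eval x (linSubst T f) = eval (T.mulVec x) f := by
  change aeval x (aeval _ f) = aeval (T.mulVec x) f
  rw [comp_aeval_apply]
  congr 2
  funext i
  simp [Matrix.mulVec, dotProduct]

theorem pderiv_linSubst [Fintype κ] (T : Matrix κ ι R) (f : MvPolynomial κ R) (j : ι) :
    pderiv j (linSubst T f) = ∑ i, T i j • linSubst T (pderiv i f) := by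
  classical
  rw [linSubst, pderiv_aeval]
  simp [pderiv_X, Pi.single_apply, smul_eq_C_mul]

theorem isHomogeneous_linSubst_monomial (T : Matrix κ ι R) (α : κ →₀ ℕ) :
    (linSubst T (monomial α 1)).IsHomogeneous α.degree := by
  rw [linSubst]
  simpa only [one_mul] using (isHomogeneous_monomial (1 : R) rfl).aeval _
    fun i => IsHomogeneous.sum _ _ _ fun j _ => isHomogeneous_C_mul_X (T i j) j

theorem mdeg_eq_of_mem_support_linSubst_monomial [Fintype κ] {T : Matrix κ ι R} {α : κ →₀ ℕ}
    {β : ι →₀ ℕ} (hβ : β ∈ (linSubst T (monomial α 1)).support) : mdeg β = mdeg α := by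
  rw [mdeg_eq_degree, mdeg_eq_degree, Finsupp.degree_apply,
    ← (isHomogeneous_linSubst_monomial T α).degree_eq_sum_deg_support hβ]

end LinSubst

section TransCoeff

open Finset

variable {m n : ℕ}

theorem sum_C_mul_X_pow (t : Fin n → ℝ) (d : ℕ) :
    (∑ j, C (t j) * X j : MvPolynomial (Fin n) ℝ) ^ d =
      ∑ k ∈ univ.piAntidiag d,
        monomial (∑ j, Finsupp.single j (k j)) (Nat.multinomial univ k * ∏ j, t j ^ k j) := by
  rw [sum_pow_eq_sum_piAntidiag]
  refine sum_congr rfl fun k _ => ?_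
  simp_rw [mul_pow, ← map_pow, C_mul_X_pow_eq_monomial, ← monomial_sum_prod, ← C_eq_coe_nat,
    C_mul_monomial]

theorem linSubst_monomial_eq_sum (T : Matrix (Fin m) (Fin n) ℝ) (α : Fin m →₀ ℕ) :
    linSubst T (monomial α 1) =
      ∑ Γ ∈ Fintype.piFinset fun i => univ.piAntidiag (α i),
        monomial (∑ i, ∑ j, Finsupp.single j (Γ i j))
          (∏ i, (Nat.multinomial univ (Γ i) * ∏ j, T i j ^ Γ i j)) := by
  rw [linSubst, aeval_monomial, map_one, one_mul, Finsupp.prod_pow]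
  simp_rw [sum_C_mul_X_pow, prod_univ_sum, monomial_sum_prod]

open scoped Nat in
theorem transCoeff_eq_coeff_linSubst (T : Matrix (Fin m) (Fin n) ℝ) (α : Fin m →₀ ℕ)
    (β : Fin n →₀ ℕ) : transCoeff T α β = coeff β (linSubst T (monomial α 1)) := by
  set S : Finset (Matrix (Fin m) (Fin n) ℕ) := Fintype.piFinset fun i => univ.piAntidiag (α i)
  have mem_S : ∀ Γ, Γ ∈ S ↔ ∀ i, ∑ j, Γ i j = α i := fun Γ =>
    Fintype.mem_piFinset.trans (forall_congr' fun i => by simp [mem_piAntidiag])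
  rw [linSubst_monomial_eq_sum, coeff_sum, transCoeff,
    finsum_eq_sum_of_support_subset _ (s := S)
      fun Γ hΓ => (mem_S Γ).mpr (of_not_not fun h => hΓ (if_neg (by tauto)))]
  refine sum_congr rfl fun Γ hΓ => ?_
  have hrow := (mem_S Γ).mp hΓ
  have hcol : (∀ j, ∑ i, Γ i j = β j) ↔ ∑ i, ∑ j, Finsupp.single j (Γ i j) = β := by
    simp [Finsupp.ext_iff, Finsupp.finsetSum_apply, Finsupp.single_apply]
  have hmult : ∀ i, (Nat.multinomial univ (Γ i) : ℝ) = (α i)! / ∏ j, ((Γ i j)! : ℝ) := by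
    intro i
    rw [eq_div_iff (by positivity), mul_comm]
    exact_mod_cast (Nat.multinomial_spec _ _).trans (by rw [hrow i])
  simp only [hrow, implies_true, true_and, hcol, coeff_monomial]
  split_ifs
  · simp only [hmult, prod_mul_distrib, prod_div_distrib]
    push_cast
    ring
  · rfl

end TransCoeff

section SegalMap

variable {ι : Type*}

def segalMap (p : (ι →₀ ℕ) → MvPolynomial ι ℝ) : MvPolynomial ι ℝ →ₗ[ℝ] MvPolynomial ι ℝ :=
  (basisMonomials ι ℝ).constr ℝ p

theorem segalMap_monomial (p : (ι →₀ ℕ) → MvPolynomial ι ℝ) (β : ι →₀ ℕ) (c : ℝ) :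
    segalMap p (monomial β c) = c • p β := by
  have hbasis : monomial β c = c • basisMonomials ι ℝ β := by
    simp [coe_basisMonomials, smul_monomial]
  rw [hbasis, map_smul, segalMap, Module.Basis.constr_basis]

theorem segalMap_eq_sum (p : (ι →₀ ℕ) → MvPolynomial ι ℝ) (f : MvPolynomial ι ℝ) :
    segalMap p f = ∑ β ∈ f.support, coeff β f • p β := by
  conv_lhs => rw [f.as_sum]
  rw [map_sum]
  exact Finset.sum_congr rfl fun β _ => segalMap_monomial p β _

end SegalMap

namespace IsSegalFamily

variable {ι κ : Type*} [Fintype ι] [DecidableEq ι] {μ : Measure (ι → ℝ)} {N : ℕ∞}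
  {p : (ι →₀ ℕ) → MvPolynomial ι ℝ}

theorem pderiv_segalMap (hp : IsSegalFamily μ N p) {f : MvPolynomial ι ℝ}
    (hf : ∀ β ∈ f.support, (mdeg β : ℕ∞) < N) (j : ι) :
    pderiv j (segalMap p f) = segalMap p (pderiv j f) := by
  conv_rhs => rw [f.as_sum]
  rw [segalMap_eq_sum, map_sum, map_sum, map_sum]
  refine Finset.sum_congr rfl fun β hβ => ?_
  rw [Derivation.map_smul, hp.2.1 β (hf β hβ) j, pderiv_monomial, segalMap_monomial, smul_smul]

theorem totalDegree_le (hp : IsSegalFamily μ N p) {β : ι →₀ ℕ} (hβ : (mdeg β : ℕ∞) < N) :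
    (p β).totalDegree ≤ mdeg β := by
  obtain ⟨k, hk⟩ : ∃ k, mdeg β = k := ⟨_, rfl⟩
  induction k generalizing β with
  | zero =>
    rw [mdeg_eq_degree, Finsupp.degree_eq_zero_iff] at hk
    simp [hk, hp.1]
  | succ k ih =>
    rw [hk]
    refine totalDegree_le_add_one_of_pderiv fun j => ?_
    rw [hp.2.1 β hβ j]
    rcases eq_or_ne (β j) 0 with hj | hj
    · simp [hj]
    · have hdeg := mdeg_sub_single_add_one hj
      have hlt : (mdeg (β - Finsupp.single j 1) : ℕ∞) < N :=
        lt_of_le_of_lt (by exact_mod_cast hdeg.le.trans' le_self_add) hβ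
      exact (totalDegree_smul_le _ _).trans ((ih hlt (by omega)).trans (by omega))

theorem integrable_eval (hp : IsSegalFamily μ N p) (hmom : HasMoments μ N) {β : ι →₀ ℕ}
    (hβ : (mdeg β : ℕ∞) < N) : Integrable (fun x => eval x (p β)) μ :=
  MvPolynomial.integrable_eval hmom ((Nat.cast_le.mpr (hp.totalDegree_le hβ)).trans_lt hβ)

theorem integral_eval (hp : IsSegalFamily μ N p) [IsProbabilityMeasure μ] {β : ι →₀ ℕ}
    (hβ : (mdeg β : ℕ∞) < N) : ∫ x, eval x (p β) ∂μ = if β = 0 then 1 else 0 := by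
  split_ifs with h
  · simp [h, hp.1]
  · refine hp.2.2 β (Nat.pos_of_ne_zero fun h0 => h ?_) hβ
    rwa [mdeg_eq_degree, Finsupp.degree_eq_zero_iff] at h0

section

variable (hmom : HasMoments μ N) (hp : IsSegalFamily μ N p) {f : MvPolynomial ι ℝ}
  (hf : ∀ β ∈ f.support, (mdeg β : ℕ∞) < N)
include hmom hp hf

theorem integrable_eval_segalMap : Integrable (fun x => eval x (segalMap p f)) μ := by
  simp_rw [segalMap_eq_sum, map_sum, smul_eval]
  exact integrable_finsetSum _ fun β hβ => (hp.integrable_eval hmom (hf β hβ)).const_mul _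

theorem integral_eval_segalMap [IsProbabilityMeasure μ] :
    ∫ x, eval x (segalMap p f) ∂μ = coeff 0 f := by
  simp_rw [segalMap_eq_sum, map_sum, smul_eval]
  rw [integral_finsetSum _ fun β hβ => (hp.integrable_eval hmom (hf β hβ)).const_mul _]
  rw [Finset.sum_congr rfl fun β hβ => by rw [integral_const_mul, hp.integral_eval (hf β hβ)]]
  simp [mul_ite, eq_comm]

end

theorem linSubst_eq_segalMap [Fintype κ] [DecidableEq κ] [IsProbabilityMeasure μ]
    (hmom : HasMoments μ N) (hp : IsSegalFamily μ N p) {T : Matrix κ ι ℝ}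
    {pT : (κ →₀ ℕ) → MvPolynomial κ ℝ} (hpT : IsSegalFamily (μ.map T.mulVec) N pT)
    {α : κ →₀ ℕ} (hα : (mdeg α : ℕ∞) < N) :
    linSubst T (pT α) = segalMap p (linSubst T (monomial α 1)) := by
  obtain ⟨k, hk⟩ : ∃ k, mdeg α = k := ⟨_, rfl⟩
  induction k generalizing α with
  | zero =>
    rw [mdeg_eq_degree, Finsupp.degree_eq_zero_iff] at hk
    rw [hk, hpT.1, ← one_def, map_one, one_def, segalMap_monomial, one_smul, hp.1, one_def]
  | succ k ih =>
    have hsupp : ∀ β ∈ (linSubst T (monomial α 1)).support, (mdeg β : ℕ∞) < N := fun β hβ => by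
      rwa [mdeg_eq_of_mem_support_linSubst_monomial hβ]
    refine eq_of_pderiv_eq_of_integral_eq (μ := μ) (fun j => ?_)
      (hp.integrable_eval_segalMap hmom hsupp) ?_
    · rw [hp.pderiv_segalMap hsupp, pderiv_linSubst, pderiv_linSubst, map_sum]
      refine Finset.sum_congr rfl fun i _ => ?_
      rw [hpT.2.1 α hα i, pderiv_monomial, one_mul]
      rcases eq_or_ne (α i) 0 with hi | hi
      · simp [hi]
      · have hdeg := mdeg_sub_single_add_one hi
        have hlt : (mdeg (α - Finsupp.single i 1) : ℕ∞) < N :=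
          lt_of_le_of_lt (by exact_mod_cast hdeg.le.trans' le_self_add) hα
        have hmono : monomial (α - Finsupp.single i 1) (α i : ℝ)
            = (α i : ℝ) • monomial (α - Finsupp.single i 1) 1 := by
          rw [smul_monomial, smul_eq_mul, mul_one]
        rw [hmono, map_smul, map_smul, map_smul, map_smul, ← ih hlt (by omega)]
    · rw [hp.integral_eval_segalMap hmom hsupp]
      simp_rw [eval_linSubst]
      rw [← integral_map (by fun_prop) (continuous_eval _).aestronglyMeasurable,
        hpT.2.2 α (by omega) hα, eq_comm, ← notMem_support_iff]
      intro h0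
      have := mdeg_eq_of_mem_support_linSubst_monomial h0
      rw [hk] at this
      simp [mdeg] at this

end IsSegalFamily

theorem segal_transformation {m n : ℕ} (μ : Measure (Fin n → ℝ)) [IsProbabilityMeasure μ]
    (N : ℕ∞) (hmom : HasMoments μ N) (T : Matrix (Fin m) (Fin n) ℝ)
    (p : (Fin n →₀ ℕ) → MvPolynomial (Fin n) ℝ)
    (pT : (Fin m →₀ ℕ) → MvPolynomial (Fin m) ℝ)
    (hp : IsSegalFamily μ N p)
    (hpT : IsSegalFamily (μ.map T.mulVec) N pT)
    (α : Fin m →₀ ℕ) (hα : (mdeg α : ℕ∞) < N) (x : Fin n → ℝ) :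
    eval (T.mulVec x) (pT α) =
      ∑ᶠ β : Fin n →₀ ℕ,
        if mdeg β = mdeg α then transCoeff T ⇑α ⇑β * eval x (p β) else 0 := by
  rw [← eval_linSubst, hp.linSubst_eq_segalMap hmom hpT hα, segalMap_eq_sum, map_sum,
    finsum_eq_sum_of_support_subset _ (s := (linSubst T (monomial α 1)).support) fun β hβ => ?_]
  · refine Finset.sum_congr rfl fun β hβ => ?_
    rw [if_pos (mdeg_eq_of_mem_support_linSubst_monomial hβ), transCoeff_eq_coeff_linSubst,
      smul_eval]
  · by_contra h
    rw [Finset.mem_coe, notMem_support_iff] at h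
    simp [transCoeff_eq_coeff_linSubst, h] at hβ
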